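/- If a graph G admits an S-coloring for a non-decreasing sequence S=(s_1,...,s_k) of positive integers, then the subdivision D(G) admits a (1, 2s_1+1, 2s_2+1, ..., 2s_k+1)-coloring. -/

import Mathlib

open SimpleGraph

/-- The subdivision `D(G)` of a graph `G`: every edge is subdivided once. -/
def Subdivision {V : Type*} (G : SimpleGraph V) : SimpleGraph (V ⊕ G.edgeSet) where
  Adj x y := match x, y with
    | Sum.inl v, Sum.inr e => v ∈ (e : Sym2 V)
    | Sum.inr e, Sum.inl v => v ∈ (e : Sym2 V)
    | _, _ => False
  symm := by constructor; rintro (v|e) (w|f) h <;> simp_all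
  loopless := by constructor; rintro (v|e) h <;> simp_all

/-- `c` is an `S`-coloring of `G` where `s` gives the distance requirements:
two distinct vertices of color `i` must be at distance at least `s i + 1`. -/
def IsSColoring {V : Type*} {k : ℕ} (G : SimpleGraph V) (s : Fin k → ℕ) (c : V → Fin k) : Prop :=
  ∀ u v : V, u ≠ v → c u = c v → (↑(s (c u) + 1) : ℕ∞) ≤ G.edist u v

/-- `c` is a packing `k`-coloring of `G` with colors `1,…,k`. -/
def IsPackingColoring {V : Type*} (G : SimpleGraph V) (k : ℕ) (c : V → ℕ) : Prop :=
  (∀ v, 1 ≤ c v ∧ c v ≤ k) ∧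
  ∀ u v : V, u ≠ v → c u = c v → (↑(c u + 1) : ℕ∞) ≤ G.edist u v

/-- A graph is 2-degenerate: every (finite, induced) subgraph has a vertex of degree at most 2. -/
def TwoDegenerate {V : Type*} [DecidableEq V] (G : SimpleGraph V) [DecidableRel G.Adj] : Prop :=
  ∀ W : Finset V, W.Nonempty → ∃ v ∈ W, (W.filter (fun w => G.Adj v w)).card ≤ 2

/-! Give every original vertex its old color shifted up by one and every subdivision vertex the
new color 0 (requirement 1). Two subdivision vertices are distinct and never adjacent, hence at
distance at least 2; a walk between original vertices in `D(G)` alternates original and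
subdivision vertices, so distances between original vertices double. -/

namespace Subdivision

variable {V : Type*} {G : SimpleGraph V}

lemma not_adj_inl_inl (u w : V) : ¬(Subdivision G).Adj (.inl u) (.inl w) := id

lemma not_adj_inr_inr (e f : G.edgeSet) : ¬(Subdivision G).Adj (.inr e) (.inr f) := id

lemma two_le_edist_inr_inr {e f : G.edgeSet} (hef : e ≠ f) :
    2 ≤ (Subdivision G).edist (.inr e) (.inr f) := by
  have h : 1 < (Subdivision G).edist (.inr e) (.inr f) := by
    rw [← not_le, edist_le_one_iff_adj_or_eq]
    rintro (hadj | heq)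
    · exact not_adj_inr_inr e f hadj
    · exact hef (Sum.inr_injective heq)
  exact Order.add_one_le_of_lt h

lemma edist_le_one_of_mem {e : G.edgeSet} {u w : V} (hu : u ∈ (e : Sym2 V))
    (hw : w ∈ (e : Sym2 V)) : G.edist u w ≤ 1 := by
  rcases eq_or_ne u w with rfl | huw
  · simp
  · obtain ⟨e, he⟩ := e
    have : e = s(u, w) := (Sym2.mem_and_mem_iff huw).mp ⟨hu, hw⟩
    exact (edist_eq_one_iff_adj.mpr (G.mem_edgeSet.mp (this ▸ he))).le

lemma two_mul_edist_le_length :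
    ∀ {u v : V} (p : (Subdivision G).Walk (.inl u) (.inl v)), 2 * G.edist u v ≤ p.length
  | _, _, .nil => by simp
  | _, _, .cons (v := .inl _) h _ => absurd h (not_adj_inl_inl _ _)
  | _, _, .cons (v := .inr _) _ (.cons (v := .inr _) h _) => absurd h (not_adj_inr_inr _ _)
  | u, v, .cons (v := .inr _) hue (.cons (v := .inl w) hwe q) => by
    have hstep : G.edist u v ≤ 1 + G.edist w v :=
      G.edist_triangle.trans (add_le_add_left (edist_le_one_of_mem hue hwe) _)
    calc 2 * G.edist u v ≤ 2 * (1 + G.edist w v) := by gcongr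
      _ = 2 + 2 * G.edist w v := by ring
      _ ≤ 2 + q.length := by gcongr; exact two_mul_edist_le_length q
      _ = _ := by simp only [Walk.length_cons]; push_cast; ring

lemma two_mul_edist_le_edist_inl_inl (u v : V) :
    2 * G.edist u v ≤ (Subdivision G).edist (.inl u) (.inl v) :=
  le_sInf <| Set.forall_mem_range.2 two_mul_edist_le_length

end Subdivision

theorem stmt2_general {V : Type*} {k : ℕ} (G : SimpleGraph V) (s : Fin k → ℕ)
    (c : V → Fin k) (hc : IsSColoring G s c) :
    ∃ c' : V ⊕ G.edgeSet → Fin (k + 1),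
      IsSColoring (Subdivision G) (Fin.cons 1 (fun i => 2 * s i + 1)) c' := by
  refine ⟨Sum.elim (Fin.succ ∘ c) (fun _ => 0), ?_⟩
  rintro (u | e) (v | f) hne hcol
  · have huv : u ≠ v := fun h => hne (congrArg _ h)
    have hcuv : c u = c v := Fin.succ_injective _ hcol
    simp only [Sum.elim_inl, Function.comp_apply, Fin.cons_succ]
    calc ((2 * s (c u) + 1 + 1 : ℕ) : ℕ∞) = 2 * ((s (c u) + 1 : ℕ) : ℕ∞) := by push_cast; ring
      _ ≤ 2 * G.edist u v := by gcongr; exact hc u v huv hcuv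
      _ ≤ _ := Subdivision.two_mul_edist_le_edist_inl_inl u v
  · exact absurd hcol (Fin.succ_ne_zero _)
  · exact absurd hcol.symm (Fin.succ_ne_zero _)
  · exact Subdivision.two_le_edist_inr_inr fun h => hne (congrArg _ h)

theorem stmt2 {V : Type*} {k : ℕ} (G : SimpleGraph V) (s : Fin k → ℕ)
    (hmono : Monotone s) (hpos : ∀ i, 1 ≤ s i)
    (c : V → Fin k) (hc : IsSColoring G s c) :
    ∃ c' : V ⊕ G.edgeSet → Fin (k + 1),
      IsSColoring (Subdivision G) (Fin.cons 1 (fun i => 2 * s i + 1)) c' :=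
  stmt2_general G s c hc
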